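/- Let T = ℂ[x,y]/(xy) and let Ω = (T·dx ⊕ T·dy)/(x·dy+y·dx). Every element of Ω can be written uniquely as f₁(x)·dx + f₂(y)·dy + c·(x·dy) with f₁ ∈ ℂ[x], f₂ ∈ ℂ[y], c ∈ ℂ. -/

import Mathlib

/- STATEMENT 17: Let T = ℂ[x,y]/(xy) and Ω = (T·dx ⊕ T·dy)/(x·dy+y·dx).
   Every element of Ω can be written uniquely as
   f₁(x)·dx + f₂(y)·dy + c·(x·dy) with f₁ ∈ ℂ[x], f₂ ∈ ℂ[y], c ∈ ℂ. -/

noncomputable section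
open MvPolynomial

abbrev P : Type := MvPolynomial (Fin 2) ℂ

abbrev T : Type := P ⧸ Ideal.span ({X 0 * X 1} : Set P)

def x : T := Ideal.Quotient.mk _ (X 0)
def y : T := Ideal.Quotient.mk _ (X 1)

def rel : Submodule T (T × T) := Submodule.span T {(y, x)}

abbrev Ω := (T × T) ⧸ rel

/-!
Every `a : T` is `f(x) + r·y` with `f` the restriction of `a` to the `x`-axis, and symmetrically.
Subtracting `r·(y, x)` from `(a, b)` clears `r·y` from the first slot; writing the second slot as
`g(y) + s·x`, one has `s·x = h(x)·x = h(0)·x + (x·k)·x`, and `(0, (x·k)·x) = (x·k)·(y, x)` because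
`x·y = 0`. For uniqueness, the `ℂ`-linear map `(a, b) ↦ (a|ₓ, b|_y, [X¹] b|ₓ - [X¹] a|_y)` is a
left inverse of the normal form and kills `rel`: on `t·(y, x)` its last entry is the difference of
the values of `t` at the origin computed along the two axes.
-/

open scoped Polynomial

lemma x_mul_y : x * y = 0 := by
  rw [x, y, ← map_mul, Ideal.Quotient.eq_zero_iff_mem]
  exact Ideal.subset_span rfl

section UniversalProperty

variable {A : Type*} [CommRing A] [Algebra ℂ A]

def liftT (f : Fin 2 → A) (hf : f 0 * f 1 = 0) : T →ₐ[ℂ] A :=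
  Ideal.Quotient.liftₐ _ (MvPolynomial.aeval f) fun p hp => by
    obtain ⟨q, rfl⟩ := Ideal.mem_span_singleton'.1 hp
    simp [hf]

@[simp] lemma liftT_x (f : Fin 2 → A) (hf : f 0 * f 1 = 0) : liftT f hf x = f 0 :=
  (Ideal.Quotient.lift_mk _ _ _).trans (MvPolynomial.aeval_X f 0)

@[simp] lemma liftT_y (f : Fin 2 → A) (hf : f 0 * f 1 = 0) : liftT f hf y = f 1 :=
  (Ideal.Quotient.lift_mk _ _ _).trans (MvPolynomial.aeval_X f 1)

lemma algHom_ext_T {φ ψ : T →ₐ[ℂ] A} (hx : φ x = ψ x) (hy : φ y = ψ y) : φ = ψ := by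
  refine Ideal.Quotient.algHom_ext ℂ (MvPolynomial.algHom_ext fun i => ?_)
  fin_cases i
  exacts [hx, hy]

end UniversalProperty

def restrictX : T →ₐ[ℂ] ℂ[X] := liftT ![Polynomial.X, 0] (by simp)

def restrictY : T →ₐ[ℂ] ℂ[X] := liftT ![0, Polynomial.X] (by simp)

@[simp] lemma restrictX_x : restrictX x = Polynomial.X := liftT_x _ _
@[simp] lemma restrictX_y : restrictX y = 0 := liftT_y _ _
@[simp] lemma restrictY_x : restrictY x = 0 := liftT_x _ _
@[simp] lemma restrictY_y : restrictY y = Polynomial.X := liftT_y _ _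

@[simp] lemma restrictX_aeval_x (q : ℂ[X]) : restrictX (Polynomial.aeval x q) = q := by
  rw [← Polynomial.aeval_algHom_apply, restrictX_x, Polynomial.aeval_X_left_apply]

@[simp] lemma restrictY_aeval_y (q : ℂ[X]) : restrictY (Polynomial.aeval y q) = q := by
  rw [← Polynomial.aeval_algHom_apply, restrictY_y, Polynomial.aeval_X_left_apply]

@[simp] lemma restrictX_aeval_y (q : ℂ[X]) :
    restrictX (Polynomial.aeval y q) = Polynomial.C (q.coeff 0) := by
  rw [← Polynomial.aeval_algHom_apply, restrictX_y, ← Polynomial.coeff_zero_eq_aeval_zero']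
  rfl

@[simp] lemma restrictY_aeval_x (q : ℂ[X]) :
    restrictY (Polynomial.aeval x q) = Polynomial.C (q.coeff 0) := by
  rw [← Polynomial.aeval_algHom_apply, restrictY_x, ← Polynomial.coeff_zero_eq_aeval_zero']
  rfl

lemma coeff_zero_restrictX_eq_restrictY (t : T) : (restrictX t).coeff 0 = (restrictY t).coeff 0 := by
  have h : (Polynomial.aeval (0 : ℂ)).comp restrictX = (Polynomial.aeval (0 : ℂ)).comp restrictY :=
    algHom_ext_T (by simp) (by simp)
  simpa [Polynomial.coeff_zero_eq_aeval_zero] using AlgHom.congr_fun h t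

lemma sub_aeval_restrictX_mem (a : T) :
    a - Polynomial.aeval x (restrictX a) ∈ Ideal.span {y} := by
  have h : ((Ideal.Quotient.mkₐ ℂ (Ideal.span {y})).comp ((Polynomial.aeval x).comp restrictX)) =
      Ideal.Quotient.mkₐ ℂ (Ideal.span {y}) :=
    algHom_ext_T (A := T ⧸ Ideal.span {y}) (by simp) (by simp)
  rw [← Ideal.Quotient.eq]
  simpa using (AlgHom.congr_fun h a).symm

lemma sub_aeval_restrictY_mem (b : T) :
    b - Polynomial.aeval y (restrictY b) ∈ Ideal.span {x} := by
  have h : ((Ideal.Quotient.mkₐ ℂ (Ideal.span {x})).comp ((Polynomial.aeval y).comp restrictY)) =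
      Ideal.Quotient.mkₐ ℂ (Ideal.span {x}) :=
    algHom_ext_T (A := T ⧸ Ideal.span {x}) (by simp) (by simp)
  rw [← Ideal.Quotient.eq]
  simpa using (AlgHom.congr_fun h b).symm

def normalForm (t : ℂ[X] × ℂ[X] × ℂ) : T × T :=
  (Polynomial.aeval x t.1, Polynomial.aeval y t.2.1 + t.2.2 • x)

lemma aeval_x_eq_x_mul_divX_add (p : ℂ[X]) :
    Polynomial.aeval x p = x * Polynomial.aeval x p.divX + algebraMap ℂ T (p.coeff 0) := by
  nth_rw 1 [← Polynomial.X_mul_divX_add p]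
  simp only [map_add, map_mul, Polynomial.aeval_X, Polynomial.aeval_C]

lemma exists_sub_normalForm_mem (v : T × T) : ∃ t, v - normalForm t ∈ rel := by
  obtain ⟨r, hr⟩ := Ideal.mem_span_singleton'.1 (sub_aeval_restrictX_mem v.1)
  obtain ⟨s, hs⟩ := Ideal.mem_span_singleton'.1 (sub_aeval_restrictY_mem (v.2 - r * x))
  obtain ⟨u, hu⟩ := Ideal.mem_span_singleton'.1 (sub_aeval_restrictX_mem s)
  set q := restrictX s
  refine ⟨(restrictX v.1, restrictY (v.2 - r * x), q.coeff 0),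
    Submodule.mem_span_singleton.2 ⟨r + Polynomial.aeval x q.divX * x, ?_⟩⟩
  have hq := aeval_x_eq_x_mul_divX_add q
  have hsmul : q.coeff 0 • x = algebraMap ℂ T (q.coeff 0) * x :=
    Algebra.smul_def (q.coeff 0) x
  ext
  · simp only [normalForm, Prod.smul_mk, Prod.fst_sub, smul_eq_mul]
    linear_combination (Polynomial.aeval x q.divX) * x_mul_y + hr
  · simp only [normalForm, Prod.smul_mk, Prod.snd_sub, smul_eq_mul]
    linear_combination hs + x * hu - x * hq - u * x_mul_y + hsmul

def coordinates : T × T →ₗ[ℂ] ℂ[X] × ℂ[X] × ℂ where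
  toFun v := (restrictX v.1, restrictY v.2, (restrictX v.2).coeff 1 - (restrictY v.1).coeff 1)
  map_add' v w := by simp [add_sub_add_comm]
  map_smul' c v := by simp [mul_sub]

lemma coordinates_normalForm (t : ℂ[X] × ℂ[X] × ℂ) : coordinates (normalForm t) = t := by
  simp [coordinates, normalForm]

lemma coordinates_eq_zero_of_mem {v : T × T} (hv : v ∈ rel) : coordinates v = 0 := by
  obtain ⟨t, rfl⟩ := Submodule.mem_span_singleton.1 hv
  simp [coordinates, coeff_zero_restrictX_eq_restrictY t]

lemma eq_of_normalForm_sub_mem {t t' : ℂ[X] × ℂ[X] × ℂ} (h : normalForm t - normalForm t' ∈ rel) :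
    t = t' := by
  have := coordinates_eq_zero_of_mem h
  rwa [map_sub, coordinates_normalForm, coordinates_normalForm, sub_eq_zero] at this

theorem stmt_17 :
    ∀ m : Ω, ∃! t : Polynomial ℂ × Polynomial ℂ × ℂ,
      m = Submodule.Quotient.mk
        ((Polynomial.aeval x) t.1, (Polynomial.aeval y) t.2.1 + t.2.2 • x) := by
  intro m
  obtain ⟨v, rfl⟩ := Submodule.Quotient.mk_surjective rel m
  obtain ⟨t, ht⟩ := exists_sub_normalForm_mem v
  have hv : Submodule.Quotient.mk v = (Submodule.Quotient.mk (normalForm t) : Ω) :=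
    (Submodule.Quotient.eq rel).2 ht
  refine ⟨t, hv, fun t' ht' => eq_of_normalForm_sub_mem ((Submodule.Quotient.eq rel).1 ?_)⟩
  exact ht'.symm.trans hv
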